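/- Inversion formula for (r,s)-even functions: if f and g are (r,s)-even and f(n) = Σ_{d|r} g(d) c_{d,s}(n) for all n, then g(m) = (1/r^s) Σ_{d|r} f(r^s/d^s) c_{d,s}(n) whenever m^s = r^s/(n,r^s)_s. -/

import Mathlib

/-!
Write `N = r ^ s` and `ω = exp (2πi / N)`. Every `k ∈ [1, N]` is uniquely `j (r/d)^s` with
`d ∣ r` and `j ∈ [1, d^s]`, `(j, d^s)_s = 1`, and then `(k, N)_s = (r/d)^s`. Hence
`c_{d,s}(n) = ∑_j ω^(n j (r/d)^s)`, and for `(r,s)`-even `f` the right-hand sum is the Fourier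
sum `∑_{k ≤ N} f(k) ω^(nk)`. Substituting `f = ∑_d g(d) c_{d,s}` and using orthogonality of the
characters `k ↦ ω^(tk)`, the term of `d` counts the `j` with `N ∣ j (r/d)^s + n`. Such a `j`
forces `(n, N)_s = (r/d)^s`, i.e. `d = m`, and over all `d` there is exactly one such pair: the
one representing `-n` modulo `N`.
-/

open Finset

/-- The generalized gcd `(a,b)_s`: the largest `s`-th power dividing both `a` and `b`. -/
noncomputable def ggcd (s a b : ℕ) : ℕ :=
  sSup {m : ℕ | (∃ l : ℕ, m = l ^ s) ∧ m ∣ a ∧ m ∣ b}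

/-- The generalized Ramanujan sum `c_{r,s}(n)`. -/
noncomputable def crs (s r n : ℕ) : ℂ :=
  ∑ j ∈ Finset.Icc 1 (r ^ s),
    if ggcd s j (r ^ s) = 1 then Complex.exp (2 * Real.pi * Complex.I * n * j / (r ^ s)) else 0

/-- The discrete Fourier transform of an `r^s`-periodic function. -/
noncomputable def dft (s r : ℕ) (f : ℕ → ℂ) (n : ℕ) : ℂ :=
  ∑ k ∈ Finset.Icc 1 (r ^ s), f k * Complex.exp (-(2 * Real.pi * Complex.I * k * n / (r ^ s)))

/-- A function is `(r,s)`-even if `f(n) = f((n, r^s)_s)` for all `n`. -/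
def IsRSEven (s r : ℕ) (f : ℕ → ℂ) : Prop := ∀ n, f n = f (ggcd s n (r ^ s))

section GeneralizedGcd

variable {s a b : ℕ}

lemma bddAbove_ggcd_set (hb : b ≠ 0) :
    BddAbove {m : ℕ | (∃ l : ℕ, m = l ^ s) ∧ m ∣ a ∧ m ∣ b} :=
  ⟨b, fun _ hm => Nat.le_of_dvd (Nat.pos_of_ne_zero hb) hm.2.2⟩

lemma ggcd_mem (hb : b ≠ 0) :
    (∃ l, ggcd s a b = l ^ s) ∧ ggcd s a b ∣ a ∧ ggcd s a b ∣ b := by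
  exact Nat.sSup_mem (s := {m : ℕ | (∃ l : ℕ, m = l ^ s) ∧ m ∣ a ∧ m ∣ b})
    ⟨1, ⟨1, (one_pow s).symm⟩, one_dvd a, one_dvd b⟩ (bddAbove_ggcd_set hb)

lemma pow_dvd_ggcd_iff (hs : s ≠ 0) (hb : b ≠ 0) {x : ℕ} :
    x ^ s ∣ ggcd s a b ↔ x ^ s ∣ a ∧ x ^ s ∣ b := by
  obtain ⟨⟨y, hy⟩, hya, hyb⟩ := ggcd_mem (s := s) (a := a) hb
  refine ⟨fun h => ⟨h.trans hya, h.trans hyb⟩, fun ⟨hxa, hxb⟩ => ?_⟩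
  have hy0 : y ≠ 0 := by rintro rfl; simp [hy, hs] at hyb; exact hb hyb
  have hx0 : x ≠ 0 := by rintro rfl; simp [hs] at hxb; exact hb hxb
  -- `lcm x y ^ s` is an `s`-th power dividing `a` and `b`, so it cannot exceed `y ^ s`
  have hlcm : Nat.lcm x y ^ s ≤ y ^ s := by
    rw [← hy, ← Nat.pow_lcm_pow]
    refine le_csSup (bddAbove_ggcd_set hb) ⟨⟨_, Nat.pow_lcm_pow ..⟩, ?_, ?_⟩
    · exact Nat.lcm_dvd hxa (hy ▸ hya)
    · exact Nat.lcm_dvd hxb (hy ▸ hyb)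
  have : Nat.lcm x y = y := le_antisymm ((Nat.pow_le_pow_iff_left hs).mp hlcm)
    (Nat.le_of_dvd (Nat.pos_of_ne_zero (Nat.lcm_ne_zero hx0 hy0)) (Nat.dvd_lcm_right x y))
  exact hy ▸ pow_dvd_pow_of_dvd (this ▸ Nat.dvd_lcm_left x y) s

lemma ggcd_eq_of_dvd_add {a' : ℕ} (h : b ∣ a + a') : ggcd s a b = ggcd s a' b := by
  unfold ggcd
  congr 1
  ext m
  simp only [Set.mem_ofPred_eq, and_congr_right_iff]
  intro _
  refine ⟨fun ⟨hma, hmb⟩ => ⟨?_, hmb⟩, fun ⟨hma', hmb⟩ => ⟨?_, hmb⟩⟩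
  · exact (Nat.dvd_add_right hma).mp (hmb.trans h)
  · exact (Nat.dvd_add_left hma').mp (hmb.trans h)

lemma ggcd_mul_pow_mul_pow (hs : s ≠ 0) (hb : b ≠ 0) {c : ℕ} (hc : c ≠ 0) :
    ggcd s (a * c ^ s) (b * c ^ s) = ggcd s a b * c ^ s := by
  have hbc : b * c ^ s ≠ 0 := mul_ne_zero hb (pow_ne_zero s hc)
  have hcs : 0 < c ^ s := Nat.pos_of_ne_zero (pow_ne_zero s hc)
  obtain ⟨⟨y, hy⟩, -, -⟩ := ggcd_mem (s := s) (a := a * c ^ s) hbc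
  obtain ⟨⟨z, hz⟩, hza, hzb⟩ := ggcd_mem (s := s) (a := a) hb
  have hcy : c ∣ y := (Nat.pow_dvd_pow_iff hs).mp <| hy ▸
    (pow_dvd_ggcd_iff hs hbc).mpr ⟨dvd_mul_left _ _, dvd_mul_left _ _⟩
  obtain ⟨u, rfl⟩ := hcy
  have hu : u ^ s ∣ ggcd s a b := by
    have := (pow_dvd_ggcd_iff (x := c * u) hs hbc).mp (by rw [hy])
    rw [mul_pow, mul_comm (c ^ s)] at this
    exact (pow_dvd_ggcd_iff hs hb).mpr
      ⟨Nat.dvd_of_mul_dvd_mul_right hcs this.1, Nat.dvd_of_mul_dvd_mul_right hcs this.2⟩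
  apply Nat.dvd_antisymm
  · rw [hy, mul_pow, mul_comm (c ^ s)]
    exact mul_dvd_mul_right hu _
  · rw [hz, ← mul_pow]
    exact (pow_dvd_ggcd_iff hs hbc).mpr
      ⟨mul_pow z c s ▸ mul_dvd_mul_right (hz ▸ hza) _,
        mul_pow z c s ▸ mul_dvd_mul_right (hz ▸ hzb) _⟩

lemma ggcd_mul_pow_mul_pow_eq_pow_iff (hs : s ≠ 0) (hb : b ≠ 0) {c : ℕ} (hc : c ≠ 0) :
    ggcd s (a * c ^ s) (b * c ^ s) = c ^ s ↔ ggcd s a b = 1 := by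
  rw [ggcd_mul_pow_mul_pow hs hb hc, mul_eq_right₀ (pow_ne_zero s hc)]

end GeneralizedGcd

noncomputable def coprimeResidues (s d : ℕ) : Finset ℕ :=
  {j ∈ Icc 1 (d ^ s) | ggcd s j (d ^ s) = 1}

section Divisors

variable {s r d j : ℕ}

lemma div_pos_of_dvd_of_ne_zero (hr : r ≠ 0) (hd : d ∣ r) : 0 < r / d :=
  Nat.div_pos (Nat.le_of_dvd (Nat.pos_of_ne_zero hr) hd)
    (Nat.pos_of_dvd_of_pos hd (Nat.pos_of_ne_zero hr))

lemma ggcd_mul_div_pow_eq_iff (hs : s ≠ 0) (hr : r ≠ 0) (hd : d ∣ r) :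
    ggcd s (j * (r / d) ^ s) (r ^ s) = (r / d) ^ s ↔ ggcd s j (d ^ s) = 1 := by
  have hrd : r ^ s = d ^ s * (r / d) ^ s := by rw [← mul_pow, Nat.mul_div_cancel' hd]
  rw [hrd]
  exact ggcd_mul_pow_mul_pow_eq_pow_iff hs (pow_ne_zero s (ne_zero_of_dvd_ne_zero hr hd))
    (div_pos_of_dvd_of_ne_zero hr hd).ne'

lemma ggcd_mul_div_pow (hs : s ≠ 0) (hr : r ≠ 0) (hd : d ∣ r)
    (hj : j ∈ coprimeResidues s d) :
    ggcd s (j * (r / d) ^ s) (r ^ s) = (r / d) ^ s :=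
  (ggcd_mul_div_pow_eq_iff hs hr hd).mpr (mem_filter.mp hj).2

lemma IsRSEven.apply_mul_div_pow {f : ℕ → ℂ} (hf : IsRSEven s r f) (hs : s ≠ 0) (hr : r ≠ 0)
    (hd : d ∣ r) (hj : j ∈ coprimeResidues s d) :
    f (j * (r / d) ^ s) = f (r ^ s / d ^ s) := by
  rw [hf, ggcd_mul_div_pow hs hr hd hj, Nat.div_pow hd]

lemma exists_mem_coprimeResidues_mul_div_pow_eq (hs : s ≠ 0) (hr : r ≠ 0) {k : ℕ}
    (hk : k ∈ Icc 1 (r ^ s)) :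
    ∃ d ∈ r.divisors, ∃ j ∈ coprimeResidues s d, j * (r / d) ^ s = k := by
  obtain ⟨hk1, hkr⟩ := mem_Icc.mp hk
  obtain ⟨⟨l, hl⟩, hlk, hlr⟩ := ggcd_mem (s := s) (a := k) (pow_ne_zero s hr)
  have hlr' : l ∣ r := (Nat.pow_dvd_pow_iff hs).mp (hl ▸ hlr)
  have hrl : r / (r / l) = l := Nat.div_div_self hlr' hr
  obtain ⟨j, rfl⟩ := hl ▸ hlk
  refine ⟨r / l, Nat.mem_divisors.mpr ⟨Nat.div_dvd_of_dvd hlr', hr⟩, j, ?_,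
    by rw [hrl, mul_comm]⟩
  have hl0 : 0 < l ^ s := Nat.pos_of_ne_zero (by rintro h; simp [h] at hk1)
  refine mem_filter.mpr ⟨mem_Icc.mpr ⟨?_, ?_⟩, ?_⟩
  · exact Nat.pos_of_ne_zero (by rintro rfl; simp at hk1)
  · rw [← Nat.mul_le_mul_left_iff hl0, ← mul_pow, Nat.mul_div_cancel' hlr']
    exact hkr
  · rw [← ggcd_mul_div_pow_eq_iff hs hr (Nat.div_dvd_of_dvd hlr'), hrl, mul_comm, hl]

lemma sum_divisors_sum_coprimeResidues {M : Type*} [AddCommMonoid M] (hs : s ≠ 0) (hr : r ≠ 0)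
    (h : ℕ → M) :
    ∑ d ∈ r.divisors, ∑ j ∈ coprimeResidues s d, h (j * (r / d) ^ s)
      = ∑ k ∈ Icc 1 (r ^ s), h k := by
  rw [sum_sigma']
  refine sum_bij (fun p _ => p.2 * (r / p.1) ^ s) ?_ ?_ ?_ fun _ _ => rfl
  · rintro ⟨d, j⟩ hp
    obtain ⟨hd, hj⟩ : d ∈ r.divisors ∧ j ∈ coprimeResidues s d := mem_sigma.mp hp
    obtain ⟨hj1, hjd⟩ := mem_Icc.mp (mem_filter.mp hj).1
    replace hd := Nat.dvd_of_mem_divisors hd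
    refine mem_Icc.mpr ⟨Nat.mul_pos hj1 (pow_pos (div_pos_of_dvd_of_ne_zero hr hd) s), ?_⟩
    calc j * (r / d) ^ s ≤ d ^ s * (r / d) ^ s := Nat.mul_le_mul_right _ hjd
      _ = r ^ s := by rw [← mul_pow, Nat.mul_div_cancel' hd]
  · rintro ⟨d, j⟩ hp ⟨d', j'⟩ hp' (heq : j * (r / d) ^ s = j' * (r / d') ^ s)
    obtain ⟨hd, hj⟩ : d ∈ r.divisors ∧ j ∈ coprimeResidues s d := mem_sigma.mp hp
    obtain ⟨hd', hj'⟩ : d' ∈ r.divisors ∧ j' ∈ coprimeResidues s d' := mem_sigma.mp hp'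
    replace hd := Nat.dvd_of_mem_divisors hd
    replace hd' := Nat.dvd_of_mem_divisors hd'
    have hdd : r / d = r / d' := Nat.pow_left_injective hs <| by
      dsimp only
      rw [← ggcd_mul_div_pow hs hr hd hj, heq, ggcd_mul_div_pow hs hr hd' hj']
    obtain rfl : d = d' := by rw [← Nat.div_div_self hd hr, hdd, Nat.div_div_self hd' hr]
    obtain rfl : j = j' :=
      Nat.eq_of_mul_eq_mul_right (pow_pos (div_pos_of_dvd_of_ne_zero hr hd) s) heq
    rfl
  · intro k hk
    obtain ⟨d, hd, j, hj, rfl⟩ := exists_mem_coprimeResidues_mul_div_pow_eq hs hr hk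
    exact ⟨⟨d, j⟩, mem_sigma.mpr ⟨hd, hj⟩, rfl⟩

end Divisors

lemma IsPrimitiveRoot.sum_Icc_pow_mul {K : Type*} [CommRing K] [IsDomain K] {ζ : K} {N : ℕ}
    (hζ : IsPrimitiveRoot ζ N) (t : ℕ) :
    ∑ k ∈ Icc 1 N, ζ ^ (t * k) = if N ∣ t then (N : K) else 0 := by
  simp_rw [pow_mul]
  split_ifs with h
  · simp [(hζ.pow_eq_one_iff_dvd t).mpr h]
  · replace h := mt (hζ.pow_eq_one_iff_dvd t).mp h
    have hN : (ζ ^ t) ^ N = 1 := by rw [← pow_mul, mul_comm, pow_mul, hζ.pow_eq_one, one_pow]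
    have hgeom : ∑ k ∈ range N, (ζ ^ t) ^ k = 0 := by
      have := geom_sum_mul (ζ ^ t) N
      rw [hN, sub_self] at this
      exact (mul_eq_zero.mp this).resolve_right (sub_ne_zero.mpr h)
    rw [← Finset.Ico_add_one_right_eq_Icc, sum_Ico_eq_sum_range, Nat.add_sub_cancel]
    simp_rw [pow_add, pow_one, ← mul_sum, hgeom, mul_zero]

noncomputable def expRoot (N : ℕ) : ℂ := Complex.exp (2 * Real.pi * Complex.I / N)

lemma isPrimitiveRoot_expRoot {N : ℕ} (hN : N ≠ 0) : IsPrimitiveRoot (expRoot N) N :=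
  Complex.isPrimitiveRoot_exp N hN

section RamanujanSums

variable {s r d : ℕ}

lemma crs_eq_sum_expRoot_pow (hr : r ≠ 0) (hd : d ∣ r) (n : ℕ) :
    crs s d n = ∑ j ∈ coprimeResidues s d, expRoot (r ^ s) ^ (n * (j * (r / d) ^ s)) := by
  obtain ⟨e, rfl⟩ := hd
  have hd0 : (d : ℂ) ≠ 0 := Nat.cast_ne_zero.mpr (left_ne_zero_of_mul hr)
  have he0 : (e : ℂ) ≠ 0 := Nat.cast_ne_zero.mpr (right_ne_zero_of_mul hr)
  rw [crs, ← sum_filter, Nat.mul_div_cancel_left e (Nat.pos_of_ne_zero (left_ne_zero_of_mul hr))]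
  refine sum_congr rfl fun j _ => ?_
  rw [expRoot, ← Complex.exp_nat_mul]
  congr 1
  push_cast
  field_simp
  ring

lemma sum_crs_mul_expRoot_pow (hr : r ≠ 0) (hd : d ∣ r) (n : ℕ) :
    ∑ k ∈ Icc 1 (r ^ s), crs s d k * expRoot (r ^ s) ^ (n * k)
      = (r ^ s : ℕ) * #{j ∈ coprimeResidues s d | r ^ s ∣ j * (r / d) ^ s + n} := by
  have hω := isPrimitiveRoot_expRoot (pow_ne_zero s hr)
  have hexp : ∀ k j : ℕ, k * (j * (r / d) ^ s) + n * k = (j * (r / d) ^ s + n) * k := by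
    intro k j; ring
  simp_rw [crs_eq_sum_expRoot_pow hr hd, sum_mul, ← pow_add, hexp]
  rw [sum_comm]
  simp_rw [hω.sum_Icc_pow_mul]
  rw [← sum_filter, sum_const, nsmul_eq_mul, mul_comm]

end RamanujanSums

lemma card_filter_Icc_dvd_add {N : ℕ} (hN : N ≠ 0) (n : ℕ) :
    #{k ∈ Icc 1 N | N ∣ k + n} = 1 := by
  have hn := Nat.mod_lt n (Nat.pos_of_ne_zero hN)
  refine card_eq_one.mpr ⟨N - n % N, ?_⟩
  ext k
  have hdvd : N ∣ k + n ↔ N ∣ k + n % N := by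
    conv_lhs => rw [← Nat.mod_add_div n N, ← add_assoc]
    exact Nat.dvd_add_left (dvd_mul_right N _)
  simp only [mem_filter, mem_Icc, mem_singleton, hdvd]
  constructor
  · rintro ⟨⟨hk1, hkN⟩, h⟩
    have := Nat.eq_of_dvd_of_lt_two_mul (by omega) h (by omega)
    omega
  · rintro rfl
    exact ⟨⟨by omega, by omega⟩, by rw [Nat.sub_add_cancel hn.le]⟩

section Inversion

variable {s r : ℕ}

lemma sum_divisors_mul_crs_eq_sum_Icc {f : ℕ → ℂ} (hf : IsRSEven s r f) (hs : s ≠ 0)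
    (hr : r ≠ 0) (n : ℕ) :
    ∑ d ∈ r.divisors, f (r ^ s / d ^ s) * crs s d n
      = ∑ k ∈ Icc 1 (r ^ s), f k * expRoot (r ^ s) ^ (n * k) := by
  rw [← sum_divisors_sum_coprimeResidues hs hr]
  refine sum_congr rfl fun d hd => ?_
  rw [crs_eq_sum_expRoot_pow hr (Nat.dvd_of_mem_divisors hd), mul_sum]
  refine sum_congr rfl fun j hj => ?_
  rw [hf.apply_mul_div_pow hs hr (Nat.dvd_of_mem_divisors hd) hj]

lemma sum_Icc_sum_divisors_mul_crs (hs : s ≠ 0) (hr : r ≠ 0) (g : ℕ → ℂ) {n m : ℕ}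
    (hm : m ^ s = r ^ s / ggcd s n (r ^ s)) :
    ∑ k ∈ Icc 1 (r ^ s), (∑ d ∈ r.divisors, g d * crs s d k) * expRoot (r ^ s) ^ (n * k) =
      (r ^ s : ℕ) * g m := by
  set X : ℕ → ℕ := fun d => #{j ∈ coprimeResidues s d | r ^ s ∣ j * (r / d) ^ s + n}
  have hX : ∀ d ∈ r.divisors, X d ≠ 0 → d = m := by
    intro d hd hXd
    obtain ⟨j, hj⟩ := card_ne_zero.mp hXd
    obtain ⟨hj, hdvd⟩ := mem_filter.mp hj
    have hd := Nat.dvd_of_mem_divisors hd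
    refine Nat.pow_left_injective hs ?_
    dsimp only
    rw [hm, ← ggcd_eq_of_dvd_add hdvd, ggcd_mul_div_pow hs hr hd hj,
      ← Nat.div_pow (Nat.div_dvd_of_dvd hd), Nat.div_div_self hd hr]
  have hXsum : ∑ d ∈ r.divisors, X d = 1 := by
    simp only [X, card_filter]
    rw [sum_divisors_sum_coprimeResidues hs hr (fun k => if r ^ s ∣ k + n then 1 else 0),
      ← card_filter, card_filter_Icc_dvd_add (pow_ne_zero s hr)]
  calc _ = ∑ d ∈ r.divisors, g d * ∑ k ∈ Icc 1 (r ^ s), crs s d k * expRoot (r ^ s) ^ (n * k) := by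
        simp_rw [sum_mul, mul_sum, mul_assoc]
        exact sum_comm
    _ = ∑ d ∈ r.divisors, g d * ((r ^ s : ℕ) * X d) := by
        refine sum_congr rfl fun d hd => ?_
        rw [sum_crs_mul_expRoot_pow hr (Nat.dvd_of_mem_divisors hd)]
    _ = ∑ d ∈ r.divisors, g m * ((r ^ s : ℕ) * X d) := by
        refine sum_congr rfl fun d hd => ?_
        by_cases hXd : X d = 0
        · simp [hXd]
        · rw [hX d hd hXd]
    _ = (r ^ s : ℕ) * g m := by
        rw [← mul_sum, ← mul_sum, ← Nat.cast_sum, hXsum]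
        ring

end Inversion

theorem stmt12_general (s r : ℕ) (hs : 0 < s) (hr : 0 < r) (f g : ℕ → ℂ)
    (hf : IsRSEven s r f)
    (hfg : ∀ n : ℕ, f n = ∑ d ∈ r.divisors, g d * crs s d n) :
    ∀ n m : ℕ, 0 < n → m ^ s = r ^ s / ggcd s n (r ^ s) →
      g m = (1 / (r : ℂ) ^ s) * ∑ d ∈ r.divisors, f (r ^ s / d ^ s) * crs s d n := by
  intro n m _ hm
  rw [sum_divisors_mul_crs_eq_sum_Icc hf hs.ne' hr.ne']
  simp_rw [hfg]
  rw [sum_Icc_sum_divisors_mul_crs hs.ne' hr.ne' g hm]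
  have hrs : (r : ℂ) ^ s ≠ 0 := pow_ne_zero s (Nat.cast_ne_zero.mpr hr.ne')
  push_cast
  field_simp

theorem stmt12 (s r : ℕ) (hs : 0 < s) (hr : 0 < r) (f g : ℕ → ℂ)
    (hf : IsRSEven s r f) (hg : IsRSEven s r g)
    (hfg : ∀ n : ℕ, f n = ∑ d ∈ r.divisors, g d * crs s d n) :
    ∀ n m : ℕ, 0 < n → m ^ s = r ^ s / ggcd s n (r ^ s) →
      g m = (1 / (r : ℂ) ^ s) * ∑ d ∈ r.divisors, f (r ^ s / d ^ s) * crs s d n :=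
  stmt12_general s r hs hr f g hf hfg
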